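/- arXiv:1809.00901 — 5 statements merged into one kernel-verified Lean document; each statement's English description precedes it below -/
import Mathlib

section
/- Let k, s, d be integers with 1 ≤ s ≤ k/2 and 1 ≤ d ≤ k−1, let κ(s) = (k−s+1)/(2s+1), and let I_d = Σ_{i ≤ d, i even} C(s,i)·C(k−s, d−i) (the sum over even i, including i = 0, of products of binomial coefficients). Then: (1) if d ≤ k/2 and we set β = (k−d+1)/d, then I_d ≤ (1 − 2s/(5β))·C(k,d) when d < κ(s), and I_d ≤ (4/5)·C(k,d) when d ≥ κ(s); (2) if d > k/2 and we set β′ = (d+1)/(k−d), then I_d ≤ (1 − 2s/(5β′))·C(k,d) when d > k − κ(s), and I_d ≤ (4/5)·C(k,d) when d ≤ k − κ(s). -/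
/-!
Write `O_d` for the complementary sum over odd `i`, so that `I_d + O_d = C(k,d)` by Vandermonde,
while `I_d - O_d` is the coefficient of `X^d` in `(1 - X)^s (1 + X)^(k-s) = (1 - X²)^s (1 + X)^(k-2s)`.

If `d < κ(s)`, `O_d` contains the term `s·C(k-s,d-1)` and `I_d` the term `C(k-s,d)`; both are a
large share of `C(k,d)` since `C(k-s,r) ≥ C(k,r)/2` when `(2s+1)r + s ≤ k` (as `(1 + 1/2s)^s ≤ 2`).
If `d ≥ κ(s)`, then `|I_d - O_d|` is at most the coefficient of `X^d` in `(1 + X²)^s (1 + X)^(k-2s)`,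
which is at most `3/5·C(k,d)`: coefficientwise `5(1 + X²)^s ≤ 3(1 + X)^(2s) + 2 - 6sX + 2X^(2s)`,
and for `d ≥ κ(s)` the correction term contributes a nonpositive amount to the coefficient of `X^d`.
For `d > k/2`, the reflection `X ↦ 1/X` multiplies `(1 - X)^s (1 + X)^(k-s)` by `(-1)^s`, so
`I_d, O_d` are `I_{k-d}, O_{k-d}` in some order and the bounds at `k - d < k/2` apply.
-/

open Finset

/-- `κ(s) = (k−s+1)/(2s+1)` as a real number. -/
noncomputable def kappa (k s : ℕ) : ℝ := ((k : ℝ) - s + 1) / (2 * s + 1)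

/-- `I_d = Σ_{i ≤ d, i even} C(s,i)·C(k−s, d−i)`. -/
def evenSum (k s d : ℕ) : ℕ :=
  ∑ i ∈ Finset.range (d + 1), if Even i then s.choose i * (k - s).choose (d - i) else 0

open Polynomial

namespace Nat

theorem choose_le_choose_of_le_of_add_le {n a b : ℕ} (hab : a ≤ b) (h : a + b ≤ n) :
    n.choose a ≤ n.choose b := by
  wlog hb : 2 * b ≤ n generalizing b
  · rw [← Nat.choose_symm (by omega : b ≤ n)]
    exact this (by omega) (by omega) (by omega)
  induction b, hab using Nat.le_induction with
  | base => rfl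
  | succ b hab ih =>
    exact (ih (by omega) (by omega)).trans (Nat.choose_le_succ_of_lt_half_left (by omega))

theorem choose_succ_le_mul_choose {m d c : ℕ} (h : m ≤ c * (d + 1) + d) :
    m.choose (d + 1) ≤ c * m.choose d := by
  refine Nat.le_of_mul_le_mul_right (c := d + 1) ?_ (by omega)
  rw [Nat.choose_succ_right_eq, mul_comm c, mul_assoc]
  exact Nat.mul_le_mul_left _ (by omega)

theorem two_mul_choose_le_choose_two_mul {s j : ℕ} (hj : 0 < j) (hjs : j < s) :
    2 * s.choose j ≤ (2 * s).choose (2 * j) := by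
  have hsq : s.choose j * s.choose j ≤ (2 * s).choose (2 * j) := by
    rw [two_mul s, Nat.add_choose_eq]
    exact single_le_sum (f := fun p : ℕ × ℕ => s.choose p.1 * s.choose p.2) (a := (j, j))
      (fun _ _ => Nat.zero_le _) (mem_antidiagonal.mpr (two_mul j).symm)
  have h2 : 2 ≤ s.choose j := by
    have := Nat.choose_pos hjs.le
    have : s.choose j ≠ 1 := by rw [Ne, Nat.choose_eq_one_iff]; omega
    omega
  nlinarith

theorem mul_choose_succ_le {t n r : ℕ} (h : (t + 1) * r ≤ n + 1) :
    t * (n + 1).choose r ≤ (t + 1) * n.choose r := by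
  have hr : r ≤ n + 1 := le_trans (Nat.le_mul_of_pos_left r t.succ_pos) h
  have key : t * (n + 1) ≤ (t + 1) * (n + 1 - r) := by
    zify [hr] at h ⊢
    linarith
  refine Nat.le_of_mul_le_mul_right (c := n + 1) ?_ (by omega)
  calc t * (n + 1).choose r * (n + 1) = (n + 1).choose r * (t * (n + 1)) := by ring
    _ ≤ (n + 1).choose r * ((t + 1) * (n + 1 - r)) := Nat.mul_le_mul_left _ key
    _ = (t + 1) * n.choose r * (n + 1) := by rw [mul_assoc (t + 1), Nat.choose_mul_succ_eq]; ring

theorem pow_mul_choose_add_le {t n r : ℕ} (h : (t + 1) * r ≤ n + 1) (j : ℕ) :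
    t ^ j * (n + j).choose r ≤ (t + 1) ^ j * n.choose r := by
  induction j with
  | zero => simp
  | succ j ih =>
    calc t ^ (j + 1) * (n + (j + 1)).choose r
        = t ^ j * (t * (n + j + 1).choose r) := by ring_nf
      _ ≤ t ^ j * ((t + 1) * (n + j).choose r) :=
          Nat.mul_le_mul_left _ (mul_choose_succ_le (by omega))
      _ = (t + 1) * (t ^ j * (n + j).choose r) := by ring
      _ ≤ (t + 1) * ((t + 1) ^ j * n.choose r) := Nat.mul_le_mul_left _ ih
      _ = (t + 1) ^ (j + 1) * n.choose r := by ring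

theorem two_mul_add_one_pow_le (s : ℕ) : (2 * s + 1) ^ s ≤ 2 * (2 * s) ^ s := by
  have hbern := one_add_mul_le_pow (a := -1 / (2 * s + 1 : ℝ))
    (by rw [neg_div, neg_le_neg_iff, div_le_iff₀ (by positivity)]; linarith) s
  have hbase : 1 + -1 / (2 * s + 1 : ℝ) = 2 * s / (2 * s + 1) := by field_simp; ring
  have hhalf : (1 / 2 : ℝ) ≤ 1 + s * (-1 / (2 * s + 1)) := by field_simp; linarith
  rw [hbase, div_pow, le_div_iff₀ (by positivity)] at hbern
  have : ((2 * s + 1 : ℝ)) ^ s ≤ 2 * (2 * s) ^ s := by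
    nlinarith [pow_pos (show (0 : ℝ) < 2 * s + 1 by positivity) s]
  exact_mod_cast this

theorem choose_le_two_mul_choose_sub {k s r : ℕ} (h : (2 * s + 1) * r + s ≤ k) :
    k.choose r ≤ 2 * (k - s).choose r := by
  rcases Nat.eq_zero_or_pos s with rfl | hs
  · simp only [Nat.sub_zero]; omega
  have key := pow_mul_choose_add_le (t := 2 * s) (n := k - s) (r := r) (by omega) s
  rw [Nat.sub_add_cancel (by omega)] at key
  refine Nat.le_of_mul_le_mul_left ?_ (pow_pos (by omega : 0 < 2 * s) s)
  calc (2 * s) ^ s * k.choose r ≤ (2 * s + 1) ^ s * (k - s).choose r := key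
    _ ≤ 2 * (2 * s) ^ s * (k - s).choose r := Nat.mul_le_mul_right _ (two_mul_add_one_pow_le s)
    _ = (2 * s) ^ s * (2 * (k - s).choose r) := by ring

end Nat

namespace Polynomial

variable {R : Type*}

theorem coeff_mul_le_coeff_mul [Semiring R] [PartialOrder R] [IsOrderedRing R] {p q r : R[X]}
    (hpq : ∀ i, p.coeff i ≤ q.coeff i) (hr : ∀ i, 0 ≤ r.coeff i) (n : ℕ) :
    (p * r).coeff n ≤ (q * r).coeff n := by
  simp only [coeff_mul]
  exact sum_le_sum fun x _ => mul_le_mul_of_nonneg_right (hpq _) (hr _)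

theorem abs_coeff_mul_le_coeff_mul [CommRing R] [LinearOrder R] [IsStrictOrderedRing R]
    {p q r : R[X]} (hpq : ∀ i, |p.coeff i| ≤ q.coeff i) (hr : ∀ i, 0 ≤ r.coeff i) (n : ℕ) :
    |(p * r).coeff n| ≤ (q * r).coeff n := by
  refine abs_le.mpr ⟨?_, coeff_mul_le_coeff_mul (fun i => (abs_le.mp (hpq i)).2) hr n⟩
  simpa [neg_mul] using
    coeff_mul_le_coeff_mul (p := -q) (fun i => by simpa using (abs_le.mp (hpq i)).1) hr n

theorem reflect_pow_of_natDegree_le [Semiring R] {p : R[X]} {N : ℕ} (hp : p.natDegree ≤ N)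
    (n : ℕ) : reflect (n * N) (p ^ n) = reflect N p ^ n := by
  induction n with
  | zero => simp [reflect_one]
  | succ n ih =>
    rw [pow_succ, add_mul, one_mul, reflect_mul _ _ (natDegree_pow_le_of_le n hp) hp, ih, pow_succ]

theorem coeff_one_sub_X_pow [CommRing R] (n i : ℕ) :
    ((1 - X : R[X]) ^ n).coeff i = (-1) ^ i * n.choose i := by
  have h : (1 - X : R[X]) ^ n = ((1 + X) ^ n).comp (C (-1) * X) := by
    simp [sub_eq_add_neg]
  rw [h, comp_C_mul_X_coeff, coeff_one_add_X_pow, mul_comm]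

theorem coeff_one_sub_X_pow_mul_one_add_X_pow_sub [CommRing R] {a b d : ℕ} (hd : d ≤ a + b) :
    ((1 - X : R[X]) ^ a * (1 + X) ^ b).coeff (a + b - d) =
      (-1) ^ a * ((1 - X : R[X]) ^ a * (1 + X) ^ b).coeff d := by
  have hdeg₁ : (1 - X : R[X]).natDegree ≤ 1 := by compute_degree
  have hdeg₂ : (1 + X : R[X]).natDegree ≤ 1 := by compute_degree
  have h₁ := reflect_pow_of_natDegree_le hdeg₁ a
  have h₂ := reflect_pow_of_natDegree_le hdeg₂ b
  rw [mul_one] at h₁ h₂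
  have h : reflect (a + b) ((1 - X : R[X]) ^ a * (1 + X) ^ b) =
      C ((-1) ^ a) * ((1 - X) ^ a * (1 + X) ^ b) := by
    rw [reflect_mul _ _ ((natDegree_pow_le_of_le a hdeg₁).trans_eq (mul_one a))
      ((natDegree_pow_le_of_le b hdeg₂).trans_eq (mul_one b)), h₁, h₂]
    simp only [reflect_sub, reflect_add, reflect_one, reflect_one_X, pow_one, map_pow, map_neg,
      map_one]
    rw [show (X - 1 : R[X]) = -1 * (1 - X) by ring, add_comm X, mul_pow, mul_assoc]
  have := congrArg (coeff · d) h
  simp only [coeff_reflect, revAt_le hd, coeff_C_mul] at this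
  exact this

theorem coeff_one_add_X_sq_pow [CommSemiring R] (n i : ℕ) :
    ((1 + X ^ 2 : R[X]) ^ n).coeff i = if 2 ∣ i then (n.choose (i / 2) : R) else 0 := by
  have h : (1 + X ^ 2 : R[X]) ^ n = expand R 2 ((1 + X) ^ n) := by simp
  rw [h, coeff_expand two_pos, coeff_one_add_X_pow]

theorem abs_coeff_one_sub_X_sq_pow_le [CommRing R] [LinearOrder R] [IsStrictOrderedRing R]
    (n i : ℕ) : |((1 - X ^ 2 : R[X]) ^ n).coeff i| ≤ ((1 + X ^ 2 : R[X]) ^ n).coeff i := by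
  have h₁ : (1 - X ^ 2 : R[X]) ^ n = expand R 2 ((1 - X) ^ n) := by simp
  have h₂ : (1 + X ^ 2 : R[X]) ^ n = expand R 2 ((1 + X) ^ n) := by simp
  rw [h₁, h₂, coeff_expand two_pos, coeff_expand two_pos]
  split_ifs <;> simp [coeff_one_sub_X_pow, coeff_one_add_X_pow, abs_mul]

theorem coeff_C_five_mul_one_add_X_sq_pow_le {s : ℕ} (hs : 1 ≤ s) (i : ℕ) :
    (C 5 * (1 + X ^ 2) ^ s : ℤ[X]).coeff i ≤
      (C 3 * (1 + X) ^ (2 * s) + (C 2 - C (6 * s : ℤ) * X + C 2 * X ^ (2 * s))).coeff i := by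
  simp only [coeff_C_mul, coeff_add, coeff_sub, coeff_C, coeff_X, coeff_X_pow,
    coeff_one_add_X_sq_pow, coeff_one_add_X_pow]
  rcases Nat.even_or_odd' i with ⟨j, rfl | rfl⟩
  · have hj1 : 1 ≠ 2 * j := by omega
    simp only [dvd_mul_right, if_true, Nat.mul_div_cancel_left _ two_pos, hj1, if_false,
      mul_eq_mul_left_iff, OfNat.ofNat_ne_zero, or_false]
    rcases Nat.eq_zero_or_pos j with rfl | hj0
    · simp [show 0 ≠ s by omega]
    rcases lt_trichotomy j s with hjs | rfl | hjs
    · have := Nat.two_mul_choose_le_choose_two_mul hj0 hjs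
      simp only [hjs.ne, if_false]
      omega
    · simp [hj0.ne']
    · simp [Nat.choose_eq_zero_of_lt hjs]
      positivity
  · have h2 : ¬ 2 ∣ 2 * j + 1 := by omega
    have h2s : 2 * j + 1 ≠ 2 * s := by omega
    rcases Nat.eq_zero_or_pos j with rfl | hj0
    · simp [h2s]
      linarith
    · simp [h2, h2s, hj0.ne']

theorem coeff_mul_one_add_X_pow_nonpos {s m d : ℕ} (hs : 1 ≤ s) (h2d : 2 * d ≤ 2 * s + m)
    (hd : m + 1 ≤ (2 * s + 1) * d) :
    ((C 2 - C (6 * s : ℤ) * X + C 2 * X ^ (2 * s)) * (1 + X) ^ m).coeff d ≤ 0 := by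
  obtain _ | d := d
  · omega
  have hsplit : (C 2 - C (6 * s : ℤ) * X + C 2 * X ^ (2 * s)) * (1 + X) ^ m =
      C 2 * (1 + X) ^ m - C (6 * s : ℤ) * (X * (1 + X) ^ m) + C 2 * (X ^ (2 * s) * (1 + X) ^ m) := by
    ring
  rw [hsplit, coeff_add, coeff_sub, coeff_C_mul, coeff_C_mul, coeff_C_mul, coeff_X_mul,
    coeff_X_pow_mul', coeff_one_add_X_pow, coeff_one_add_X_pow]
  have h₁ : (m.choose (d + 1) : ℤ) ≤ 2 * s * m.choose d := by
    exact_mod_cast Nat.choose_succ_le_mul_choose (by nlinarith)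
  split_ifs with h
  · have h₂ : (m.choose (d + 1 - 2 * s) : ℤ) ≤ m.choose d := by
      exact_mod_cast Nat.choose_le_choose_of_le_of_add_le (by omega) (by omega)
    rw [coeff_one_add_X_pow]
    nlinarith
  · nlinarith

theorem five_mul_coeff_one_add_X_sq_pow_mul_le {s m d : ℕ} (hs : 1 ≤ s) (h2d : 2 * d ≤ 2 * s + m)
    (hd : m + 1 ≤ (2 * s + 1) * d) :
    5 * ((1 + X ^ 2) ^ s * (1 + X) ^ m : ℤ[X]).coeff d ≤ 3 * (2 * s + m).choose d := by
  have h := coeff_mul_le_coeff_mul (r := (1 + X) ^ m) (coeff_C_five_mul_one_add_X_sq_pow_le hs)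
    (fun i => by rw [coeff_one_add_X_pow]; positivity) d
  rw [mul_assoc, coeff_C_mul, add_mul, coeff_add, mul_assoc, coeff_C_mul, ← pow_add,
    coeff_one_add_X_pow] at h
  linarith [coeff_mul_one_add_X_pow_nonpos hs h2d hd]

end Polynomial

def oddSum (k s d : ℕ) : ℕ :=
  ∑ i ∈ range (d + 1), if Odd i then s.choose i * (k - s).choose (d - i) else 0

theorem evenSum_add_oddSum {k s : ℕ} (h : s ≤ k) (d : ℕ) :
    evenSum k s d + oddSum k s d = k.choose d := by
  conv_rhs => rw [← Nat.add_sub_cancel' h, Nat.add_choose_eq,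
    Nat.sum_antidiagonal_eq_sum_range_succ_mk]
  rw [evenSum, oddSum, ← sum_add_distrib]
  refine sum_congr rfl fun i _ => ?_
  rcases Nat.even_or_odd i with hi | hi <;> simp [hi, Nat.not_odd_iff_even, Nat.not_even_iff_odd]

theorem evenSum_sub_oddSum (k s d : ℕ) :
    (evenSum k s d : ℤ) - oddSum k s d = ((1 - X) ^ s * (1 + X) ^ (k - s) : ℤ[X]).coeff d := by
  rw [coeff_mul, Nat.sum_antidiagonal_eq_sum_range_succ_mk, evenSum, oddSum]
  push_cast
  rw [← sum_sub_distrib]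
  refine sum_congr rfl fun i _ => ?_
  rw [coeff_one_sub_X_pow, coeff_one_add_X_pow]
  rcases Nat.even_or_odd i with hi | hi <;>
    simp [hi, hi.neg_one_pow, Nat.not_odd_iff_even, Nat.not_even_iff_odd]

theorem evenSum_sub_oddSum_reflect {k s d : ℕ} (hsk : s ≤ k) (hd : d ≤ k) :
    (evenSum k s (k - d) : ℤ) - oddSum k s (k - d) = (-1) ^ s * (evenSum k s d - oddSum k s d) := by
  rw [evenSum_sub_oddSum, evenSum_sub_oddSum]
  have := coeff_one_sub_X_pow_mul_one_add_X_pow_sub (R := ℤ) (a := s) (b := k - s) (d := d)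
    (by omega)
  rwa [Nat.add_sub_cancel' hsk] at this

theorem evenSum_oddSum_reflect {k s d : ℕ} (hsk : s ≤ k) (hd : d ≤ k) :
    evenSum k s (k - d) = evenSum k s d ∧ oddSum k s (k - d) = oddSum k s d ∨
      evenSum k s (k - d) = oddSum k s d ∧ oddSum k s (k - d) = evenSum k s d := by
  have hsum := evenSum_add_oddSum hsk (k - d)
  rw [Nat.choose_symm hd, ← evenSum_add_oddSum hsk d] at hsum
  have hdiff := evenSum_sub_oddSum_reflect hsk hd
  rcases neg_one_pow_eq_or ℤ s with h | h <;> rw [h] at hdiff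
  · left; constructor <;> omega
  · right; constructor <;> omega

theorem choose_sub_le_evenSum (k s d : ℕ) : (k - s).choose d ≤ evenSum k s d := by
  rw [evenSum]
  simpa using single_le_sum
    (f := fun i => if Even i then s.choose i * (k - s).choose (d - i) else 0)
    (fun _ _ => Nat.zero_le _) (mem_range.mpr d.succ_pos)

theorem mul_choose_sub_le_oddSum {d : ℕ} (hd : 1 ≤ d) (k s : ℕ) :
    s * (k - s).choose (d - 1) ≤ oddSum k s d := by
  rw [oddSum]
  simpa using single_le_sum
    (f := fun i => if Odd i then s.choose i * (k - s).choose (d - i) else 0)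
    (fun _ _ => Nat.zero_le _) (mem_range.mpr (by omega : 1 < d + 1))

theorem mul_mul_choose_le_evenSum {k s d : ℕ} (h : (2 * s + 1) * d + s ≤ k) :
    s * d * k.choose d ≤ 2 * (k - d + 1) * evenSum k s d := by
  have hsd : s * d ≤ k - d + 1 := by
    have : (2 * s + 1) * d = 2 * (s * d) + d := by ring
    omega
  calc s * d * k.choose d ≤ (k - d + 1) * (2 * (k - s).choose d) :=
        Nat.mul_le_mul hsd (Nat.choose_le_two_mul_choose_sub h)
    _ ≤ 2 * (k - d + 1) * evenSum k s d := by
        rw [mul_left_comm, ← mul_assoc]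
        exact Nat.mul_le_mul_left _ (choose_sub_le_evenSum k s d)

theorem mul_mul_choose_le_oddSum {k s d : ℕ} (hd : 1 ≤ d) (h : (2 * s + 1) * d + s ≤ k) :
    s * d * k.choose d ≤ 2 * (k - d + 1) * oddSum k s d := by
  have hdk : d ≤ k := by
    have := Nat.le_mul_of_pos_left d (show 0 < 2 * s + 1 by omega)
    omega
  have hpascal : k.choose d * d = k.choose (d - 1) * (k - d + 1) := by
    have := Nat.choose_succ_right_eq k (d - 1)
    rwa [Nat.sub_add_cancel hd, show k - (d - 1) = k - d + 1 by omega] at this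
  have hratio : k.choose (d - 1) ≤ 2 * (k - s).choose (d - 1) := by
    have := Nat.mul_le_mul_left (2 * s + 1) (Nat.sub_le d 1)
    exact Nat.choose_le_two_mul_choose_sub (by omega)
  calc s * d * k.choose d = s * (k.choose d * d) := by ring
    _ = s * (k - d + 1) * k.choose (d - 1) := by rw [hpascal]; ring
    _ ≤ s * (k - d + 1) * (2 * (k - s).choose (d - 1)) := Nat.mul_le_mul_left _ hratio
    _ = 2 * (k - d + 1) * (s * (k - s).choose (d - 1)) := by ring
    _ ≤ 2 * (k - d + 1) * oddSum k s d := Nat.mul_le_mul_left _ (mul_choose_sub_le_oddSum hd k s)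

theorem mul_mul_choose_le_oddSum_reflect {k s e : ℕ} (he : 1 ≤ e) (h : (2 * s + 1) * e + s ≤ k) :
    s * e * k.choose e ≤ 2 * (k - e + 1) * oddSum k s (k - e) := by
  have hek : e ≤ (2 * s + 1) * e := Nat.le_mul_of_pos_left e (by omega)
  rcases evenSum_oddSum_reflect (k := k) (s := s) (d := e) (by omega) (by omega) with
    ⟨-, hO⟩ | ⟨-, hO⟩ <;> rw [hO]
  · exact mul_mul_choose_le_oddSum he h
  · exact mul_mul_choose_le_evenSum h

theorem five_mul_evenSum_le {k s d : ℕ} (hs : 1 ≤ s) (hsk : 2 * s ≤ k) (h2d : 2 * d ≤ k)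
    (hd : k < (2 * s + 1) * d + s) :
    5 * evenSum k s d ≤ 4 * k.choose d ∧ 5 * oddSum k s d ≤ 4 * k.choose d := by
  obtain ⟨m, rfl⟩ : ∃ m, k = 2 * s + m := ⟨k - 2 * s, by omega⟩
  have habs : |(evenSum (2 * s + m) s d : ℤ) - oddSum (2 * s + m) s d| ≤
      ((1 + X ^ 2) ^ s * (1 + X) ^ m : ℤ[X]).coeff d := by
    rw [evenSum_sub_oddSum, show 2 * s + m - s = s + m by omega,
      show ((1 - X) ^ s * (1 + X) ^ (s + m) : ℤ[X]) = (1 - X ^ 2) ^ s * (1 + X) ^ m by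
        rw [pow_add, ← mul_assoc, ← mul_pow]; ring]
    exact abs_coeff_mul_le_coeff_mul (abs_coeff_one_sub_X_sq_pow_le s)
      (fun i => by rw [coeff_one_add_X_pow]; positivity) d
  have h5 := five_mul_coeff_one_add_X_sq_pow_mul_le hs h2d (by omega)
  have hsum := evenSum_add_oddSum (k := 2 * s + m) (s := s) (by omega) d
  rw [abs_le] at habs
  constructor <;> omega

theorem five_mul_evenSum_reflect_le {k s e : ℕ} (hs : 1 ≤ s) (hsk : 2 * s ≤ k) (he : 2 * e ≤ k)
    (h : k < (2 * s + 1) * e + s) : 5 * evenSum k s (k - e) ≤ 4 * k.choose e := by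
  rcases evenSum_oddSum_reflect (k := k) (s := s) (d := e) (by omega) (by omega) with
    ⟨hI, -⟩ | ⟨hI, -⟩ <;> rw [hI]
  exacts [(five_mul_evenSum_le hs hsk he h).1, (five_mul_evenSum_le hs hsk he h).2]

theorem lt_kappa_iff {k s d : ℕ} : (d : ℝ) < kappa k s ↔ (2 * s + 1) * d + s ≤ k := by
  rw [kappa, lt_div_iff₀ (by positivity), ← Nat.lt_succ_iff, ← Nat.cast_lt (α := ℝ)]
  push_cast
  constructor <;> intro h <;> linarith

theorem le_one_sub_div_mul_of_le {I O C s a b : ℝ} (ha : 0 < a) (hO : 0 ≤ O)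
    (hIO : I + O = C) (h : s * b * C ≤ 2 * a * O) :
    I ≤ (1 - 2 * s / (5 * (a / b))) * C := by
  have hC : (1 - 2 * s / (5 * (a / b))) * C = C - 2 * (s * b * C) / (5 * a) := by
    field_simp
  have hO' : 2 * (s * b * C) / (5 * a) ≤ O := by
    rw [div_le_iff₀ (by positivity)]
    nlinarith [mul_nonneg ha.le hO]
  rw [hC]
  linarith

theorem evenSum_le_of_lt_kappa {k s d : ℕ} (hd : 1 ≤ d) (hκ : (d : ℝ) < kappa k s) :
    (evenSum k s d : ℝ) ≤ (1 - 2 * s / (5 * (((k : ℝ) - d + 1) / d))) * (k.choose d : ℝ) := by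
  rw [lt_kappa_iff] at hκ
  have hdk : d ≤ k := by
    have := Nat.le_mul_of_pos_left d (show 0 < 2 * s + 1 by omega)
    omega
  have hdk' : (d : ℝ) ≤ k := by exact_mod_cast hdk
  refine le_one_sub_div_mul_of_le (O := oddSum k s d) (by linarith) (Nat.cast_nonneg _)
    (by exact_mod_cast evenSum_add_oddSum (by omega) d) ?_
  have hcast : ((k - d + 1 : ℕ) : ℝ) = k - d + 1 := by push_cast [Nat.cast_sub hdk]; ring
  rw [← hcast]
  exact_mod_cast mul_mul_choose_le_oddSum hd hκ

theorem evenSum_le_of_kappa_le {k s d : ℕ} (hs : 1 ≤ s) (hsk : 2 * s ≤ k) (hd : 2 * d ≤ k)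
    (hκ : kappa k s ≤ d) : (evenSum k s d : ℝ) ≤ 4 / 5 * (k.choose d : ℝ) := by
  rw [← not_lt, lt_kappa_iff, not_le] at hκ
  have : ((5 * evenSum k s d : ℕ) : ℝ) ≤ (4 * k.choose d : ℕ) := by
    exact_mod_cast (five_mul_evenSum_le hs hsk hd hκ).1
  push_cast at this
  linarith

theorem evenSum_le_of_sub_kappa_lt {k s d : ℕ} (hdk : d < k) (hκ : (k : ℝ) - kappa k s < d) :
    (evenSum k s d : ℝ) ≤
      (1 - 2 * s / (5 * (((d : ℝ) + 1) / ((k : ℝ) - d)))) * (k.choose d : ℝ) := by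
  have hcast : ((k - d : ℕ) : ℝ) = k - d := Nat.cast_sub hdk.le
  have hκ' : ((k - d : ℕ) : ℝ) < kappa k s := by rw [hcast]; linarith
  rw [lt_kappa_iff] at hκ'
  have hO := mul_mul_choose_le_oddSum_reflect (e := k - d) (by omega) hκ'
  rw [Nat.sub_sub_self hdk.le, Nat.choose_symm hdk.le] at hO
  have hsk : s ≤ k := by
    have := Nat.le_mul_of_pos_left (k - d) (show 0 < 2 * s + 1 by omega)
    omega
  refine le_one_sub_div_mul_of_le (O := oddSum k s d) (by positivity) (Nat.cast_nonneg _)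
    (by exact_mod_cast evenSum_add_oddSum hsk d) ?_
  rw [← hcast]
  exact_mod_cast hO

theorem evenSum_le_of_le_sub_kappa {k s d : ℕ} (hs : 1 ≤ s) (hsk : 2 * s ≤ k) (hdk : d ≤ k)
    (hd : k < 2 * d) (hκ : (d : ℝ) ≤ k - kappa k s) :
    (evenSum k s d : ℝ) ≤ 4 / 5 * (k.choose d : ℝ) := by
  have hcast : ((k - d : ℕ) : ℝ) = k - d := Nat.cast_sub hdk
  have hκ' : ¬ ((k - d : ℕ) : ℝ) < kappa k s := by rw [hcast]; linarith
  rw [lt_kappa_iff, not_le] at hκ'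
  have h := five_mul_evenSum_reflect_le hs hsk (by omega) hκ'
  rw [Nat.sub_sub_self hdk, Nat.choose_symm hdk] at h
  have : ((5 * evenSum k s d : ℕ) : ℝ) ≤ (4 * k.choose d : ℕ) := by exact_mod_cast h
  push_cast at this
  linarith

theorem stmt0 (k s d : ℕ) (hs1 : 1 ≤ s) (hs2 : 2 * s ≤ k) (hd1 : 1 ≤ d) (hd2 : d ≤ k - 1) :
    (2 * d ≤ k →
      (((d : ℝ) < kappa k s →
          (evenSum k s d : ℝ) ≤
            (1 - 2 * s / (5 * (((k : ℝ) - d + 1) / d))) * (k.choose d : ℝ)) ∧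
        (kappa k s ≤ (d : ℝ) →
          (evenSum k s d : ℝ) ≤ (4 / 5) * (k.choose d : ℝ)))) ∧
    (k < 2 * d →
      (((k : ℝ) - kappa k s < (d : ℝ) →
          (evenSum k s d : ℝ) ≤
            (1 - 2 * s / (5 * (((d : ℝ) + 1) / ((k : ℝ) - d)))) * (k.choose d : ℝ)) ∧
        ((d : ℝ) ≤ (k : ℝ) - kappa k s →
          (evenSum k s d : ℝ) ≤ (4 / 5) * (k.choose d : ℝ)))) :=
  ⟨fun h2d => ⟨evenSum_le_of_lt_kappa hd1, evenSum_le_of_kappa_le hs1 hs2 h2d⟩,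
    fun h2d => ⟨evenSum_le_of_sub_kappa_lt (by omega),
      evenSum_le_of_le_sub_kappa hs1 hs2 (by omega) h2d⟩⟩
end

section
/- For any positive integers a ≥ b, Σ_{j=1}^{b} ∏_{i=0}^{j−1} (b−i)/(a−i) = b/(a−b+1); that is, b/a + b(b−1)/(a(a−1)) + ⋯ + b(b−1)⋯1/(a(a−1)⋯(a−b+1)) = b/(a−b+1). -/
open Finset

theorem stmt6 (a b : ℕ) (hb : 0 < b) (hab : b ≤ a) :
    ∑ j ∈ Finset.Icc 1 b, ∏ i ∈ Finset.range j, (((b : ℚ) - i) / ((a : ℚ) - i)) =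
      (b : ℚ) / ((a : ℚ) - b + 1) := by
  set f : ℕ → ℚ := fun j => (∏ i ∈ Finset.range j, (((b:ℚ) - i) / ((a:ℚ) - i))) * ((b:ℚ) - j)
    with hf
  have hd : ((a:ℚ) - b + 1) ≠ 0 := by
    have : (b:ℚ) ≤ a := by exact_mod_cast hab
    linarith
  have key : ∀ k, k < b → ∏ i ∈ Finset.range (k+1), (((b:ℚ) - i)/((a:ℚ) - i))
      = (f k - f (k+1)) / ((a:ℚ) - b + 1) := by
    intro k hk
    have hka : k < a := lt_of_lt_of_le hk hab
    have hak : (a:ℚ) - k ≠ 0 := by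
      have : (k:ℚ) < a := by exact_mod_cast hka
      linarith
    have hprod : (∏ x ∈ Finset.range k, ((a:ℚ) - x)) ≠ 0 := by
      apply Finset.prod_ne_zero_iff.mpr
      intro x hx
      have : (x:ℚ) < a := by
        exact_mod_cast lt_of_lt_of_le (Finset.mem_range.mp hx) (le_of_lt hka)
      intro h; linarith
    simp only [hf, Finset.prod_range_succ]
    push_cast
    field_simp
    ring
  rw [show Finset.Icc 1 b = Finset.Ico 1 (b+1) by rw [Finset.Ico_add_one_right_eq_Icc],
    Finset.sum_Ico_eq_sum_range]
  have hbb : b + 1 - 1 = b := by omega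
  rw [hbb]
  have : ∑ i ∈ Finset.range b, ∏ j ∈ Finset.range (1 + i), (((b:ℚ) - j)/((a:ℚ) - j))
      = ∑ i ∈ Finset.range b, (f i - f (i+1)) / ((a:ℚ) - b + 1) := by
    apply Finset.sum_congr rfl
    intro i hi
    rw [Nat.add_comm 1 i]
    exact key i (Finset.mem_range.mp hi)
  rw [this, ← Finset.sum_div, Finset.sum_range_sub']
  simp [hf]
end

section
/- Let k ≥ 2 and L be integers with 1 ≤ L ≤ k−1, and for each integer d with 2 ≤ d ≤ k−L+1 set q(d,L) = d(d−1)·L·∏_{j=0}^{d−3}(k−L−1−j) / ∏_{j=0}^{d−1}(k−j). Then Σ_{d=2}^{k−L+1} q(d,L)/(d(d−1)) = 1/k. -/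
open Finset

/-- `q(d,L) = d(d−1)·L·∏_{j=0}^{d−3}(k−L−1−j) / ∏_{j=0}^{d−1}(k−j)`, the probability that an
output node of degree `d` is released when `L` input nodes remain unprocessed. -/
noncomputable def qRel (k L d : ℕ) : ℝ :=
  ((d : ℝ) * ((d : ℝ) - 1) * L * ∏ j ∈ Finset.range (d - 2), ((k : ℝ) - L - 1 - j)) /
    ∏ j ∈ Finset.range d, ((k : ℝ) - j)

/-!
With `r i = ∏_{j<i}(k−L−1−j) / ∏_{j≤i}(k−j)` (`fallingRatio k L i`), the summand
`q(i+2,L)/((i+2)(i+1)) = L·∏_{j<i}(k−L−1−j) / ∏_{j<i+2}(k−j)` equals `r i − r (i+1)`, because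
`1 − (k−L−1−i)/(k−1−i) = L/(k−1−i)`. The sum therefore telescopes to `r 0 − r (k−L) = 1/k − 0`,
the last value vanishing through its factor `j = k−L−1`.
-/

section FallingRatio

variable {K : Type*} [Field K]

def fallingRatio (x a : K) (i : ℕ) : K :=
  (∏ j ∈ range i, (x - a - 1 - j)) / ∏ j ∈ range (i + 1), (x - j)

theorem fallingRatio_zero (x a : K) : fallingRatio x a 0 = 1 / x := by
  simp [fallingRatio]

theorem fallingRatio_succ_eq_zero {x a : K} {n : ℕ} (h : x - a - 1 - n = 0) :
    fallingRatio x a (n + 1) = 0 := by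
  rw [fallingRatio, prod_range_succ, h, mul_zero, zero_div]

theorem fallingRatio_sub_succ {x : K} (a : K) {i : ℕ} (hx : x - 1 - i ≠ 0) :
    fallingRatio x a i - fallingRatio x a (i + 1) =
      a * (∏ j ∈ range i, (x - a - 1 - j)) / ∏ j ∈ range (i + 2), (x - j) := by
  rw [fallingRatio, fallingRatio, prod_range_succ (fun j : ℕ => x - a - 1 - j) i,
    prod_range_succ (fun j : ℕ => x - j) (i + 1)]
  generalize ∏ j ∈ range i, (x - a - 1 - j) = A
  generalize ∏ j ∈ range (i + 1), (x - j) = B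
  rcases eq_or_ne B 0 with rfl | hB
  · simp
  · rw [Nat.cast_add_one, show x - ((i : K) + 1) = x - 1 - i by ring]
    field_simp
    ring

end FallingRatio

theorem qRel_div_eq (k L i : ℕ) :
    qRel k L (i + 2) / (((i + 2 : ℕ) : ℝ) * ((i + 2 : ℕ) - 1)) =
      L * (∏ j ∈ range i, ((k : ℝ) - L - 1 - j)) / ∏ j ∈ range (i + 2), ((k : ℝ) - j) := by
  have hd : ((i + 2 : ℕ) : ℝ) * ((i + 2 : ℕ) - 1) ≠ 0 := by
    rw [show ((i + 2 : ℕ) : ℝ) - 1 = i + 1 by push_cast; ring]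
    positivity
  rw [qRel, Nat.add_sub_cancel, div_right_comm, mul_assoc _ (L : ℝ), mul_div_cancel_left₀ _ hd]

theorem stmt7_general (k L : ℕ) (hL1 : 1 ≤ L) (hL2 : L ≤ k - 1) :
    ∑ d ∈ Finset.Icc 2 (k - L + 1), qRel k L d / ((d : ℝ) * ((d : ℝ) - 1)) = 1 / k := by
  obtain ⟨n, rfl⟩ : ∃ n, k = L + 1 + n := ⟨k - L - 1, by omega⟩
  rw [show L + 1 + n - L + 1 = n + 2 by omega, ← Ico_add_one_right_eq_Icc,
    sum_Ico_eq_sum_range, show n + 2 + 1 - 2 = n + 1 by omega]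
  calc ∑ i ∈ range (n + 1), qRel (L + 1 + n) L (2 + i) / (((2 + i : ℕ) : ℝ) * ((2 + i : ℕ) - 1))
      = ∑ i ∈ range (n + 1), (fallingRatio ((L + 1 + n : ℕ) : ℝ) L i -
          fallingRatio ((L + 1 + n : ℕ) : ℝ) L (i + 1)) := by
        refine sum_congr rfl fun i hi => ?_
        have hin : (i : ℝ) ≤ n := by exact_mod_cast mem_range_succ_iff.mp hi
        have hL : (1 : ℝ) ≤ L := by exact_mod_cast hL1
        rw [add_comm 2 i, qRel_div_eq, fallingRatio_sub_succ]
        push_cast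
        linarith
    _ = 1 / ((L + 1 + n : ℕ) : ℝ) := by
        rw [sum_range_sub', fallingRatio_zero, fallingRatio_succ_eq_zero (by push_cast; ring),
          sub_zero]

theorem stmt7 (k L : ℕ) (hk : 2 ≤ k) (hL1 : 1 ≤ L) (hL2 : L ≤ k - 1) :
    ∑ d ∈ Finset.Icc 2 (k - L + 1), qRel k L d / ((d : ℝ) * ((d : ℝ) - 1)) = 1 / k :=
  stmt7_general k L hL1 hL2
end

section
/- Let k and D be integers with D ≥ 2 and k ≥ D+1, and let L be an integer with 1 ≤ L ≤ k−D. With q(d,L) = d(d−1)·L·∏_{j=0}^{d−3}(k−L−1−j) / ∏_{j=0}^{d−1}(k−j), the release probability under the soliton distribution with maximum degree D satisfies r(L) := Σ_{d=2}^{D} q(d,L)/(d(d−1)) = (1/k)·(1 − ∏_{j=1}^{D−1}(1 − L/(k−j))). -/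
open Finset

lemma key (k L d : ℕ) (hd : 2 ≤ d) (hk : d + 1 ≤ k) :
    qRel k L d / ((d : ℝ) * ((d : ℝ) - 1)) =
      (1 / (k : ℝ)) * (∏ j ∈ Finset.Icc 1 (d - 2), (1 - (L : ℝ) / ((k : ℝ) - j))
        - ∏ j ∈ Finset.Icc 1 (d - 1), (1 - (L : ℝ) / ((k : ℝ) - j))) := by
  have hjk : ∀ j ∈ Finset.Icc 1 (d - 1), ((k : ℝ) - j) ≠ 0 := by
    intro j hj
    simp only [mem_Icc] at hj
    have : (j : ℝ) < k := by exact_mod_cast (show j < k by omega)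
    intro h; linarith
  have hquot : ∀ m, m ≤ d - 1 →
      ∏ j ∈ Finset.Icc 1 m, (1 - (L : ℝ) / ((k : ℝ) - j))
        = (∏ j ∈ Finset.Icc 1 m, ((k : ℝ) - L - j)) / ∏ j ∈ Finset.Icc 1 m, ((k : ℝ) - j) := by
    intro m hm
    rw [← Finset.prod_div_distrib]
    refine Finset.prod_congr rfl fun j hj => ?_
    have hne : ((k : ℝ) - j) ≠ 0 := by
      apply hjk; simp only [mem_Icc] at hj ⊢; omega
    field_simp
    ring
  rw [hquot _ (by omega), hquot _ (by omega)]
  have hsplit : ∀ f : ℕ → ℝ, ∏ j ∈ Finset.Icc 1 (d - 1), f j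
      = (∏ j ∈ Finset.Icc 1 (d - 2), f j) * f (d - 1) := by
    intro f
    rw [show d - 1 = (d - 2) + 1 by omega, Finset.prod_Icc_succ_top (by omega)]
  rw [hsplit, hsplit]
  unfold qRel
  have hIco : ∀ a : ℕ, Finset.Icc 1 (d - a - 1) = Finset.Ico 1 (d - a) → True := fun _ _ => trivial
  have hN : ∏ j ∈ Finset.range (d - 2), ((k : ℝ) - L - 1 - j)
      = ∏ j ∈ Finset.Icc 1 (d - 2), ((k : ℝ) - L - j) := by
    rw [show Finset.Icc 1 (d - 2) = Finset.Ico 1 (d - 1) by ext x; simp only [mem_Icc, mem_Ico]; omega,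
      Finset.prod_Ico_eq_prod_range]
    refine Finset.prod_congr (by congr 1) fun j hj => ?_
    push_cast; ring
  have hDen : ∏ j ∈ Finset.range d, ((k : ℝ) - j)
      = (k : ℝ) * ((∏ j ∈ Finset.Icc 1 (d - 2), ((k : ℝ) - j)) * ((k : ℝ) - (d - 1 : ℕ))) := by
    rw [Finset.range_eq_Ico, Finset.prod_eq_prod_Ico_succ_bot (by omega),
      show Finset.Ico 1 d = Finset.Icc 1 (d - 1) by ext x; simp only [mem_Icc, mem_Ico]; omega,
      hsplit fun j => ((k : ℝ) - j)]
    push_cast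
    ring
  rw [hN, hDen]
  have hM : (∏ j ∈ Finset.Icc 1 (d - 2), ((k : ℝ) - j)) ≠ 0 := by
    refine Finset.prod_ne_zero_iff.2 fun j hj => ?_
    apply hjk; simp only [mem_Icc] at hj ⊢; omega
  have hk0 : (k : ℝ) ≠ 0 := by exact_mod_cast (show 0 < k by omega).ne'
  have hkd : ((k : ℝ) - (d - 1 : ℕ)) ≠ 0 := by apply hjk; simp only [mem_Icc]; omega
  have hdd : (d : ℝ) * ((d : ℝ) - 1) ≠ 0 := by
    have h2 : (2 : ℝ) ≤ (d : ℝ) := by exact_mod_cast hd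
    refine mul_ne_zero (by linarith) (by linarith)
  set M := ∏ j ∈ Finset.Icc 1 (d - 2), ((k : ℝ) - j) with hMdef
  set N := ∏ j ∈ Finset.Icc 1 (d - 2), ((k : ℝ) - ↑L - ↑j) with hNdef
  set c := (k : ℝ) - ((d - 1 : ℕ) : ℝ) with hcdef
  rw [show (k : ℝ) - ↑L - ((d - 1 : ℕ) : ℝ) = c - L from by rw [hcdef]; ring]
  set dd := (d : ℝ) * ((d : ℝ) - 1) with hdddef
  field_simp
  ring

theorem stmt8 (k D L : ℕ) (hD : 2 ≤ D) (hk : D + 1 ≤ k) (hL1 : 1 ≤ L) (hL2 : L ≤ k - D) :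
    ∑ d ∈ Finset.Icc 2 D, qRel k L d / ((d : ℝ) * ((d : ℝ) - 1)) =
      (1 / (k : ℝ)) * (1 - ∏ j ∈ Finset.Icc 1 (D - 1), (1 - (L : ℝ) / ((k : ℝ) - j))) := by
  set g : ℕ → ℝ := fun m => ∏ j ∈ Finset.Icc 1 m, (1 - (L : ℝ) / ((k : ℝ) - j)) with hg
  have h1 : ∑ d ∈ Finset.Icc 2 D, qRel k L d / ((d : ℝ) * ((d : ℝ) - 1))
      = ∑ d ∈ Finset.Icc 2 D, (1 / (k : ℝ)) * (g (d - 2) - g (d - 1)) := by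
    refine Finset.sum_congr rfl fun d hd => ?_
    simp only [mem_Icc] at hd
    exact key k L d hd.1 (by omega)
  rw [h1, ← Finset.mul_sum]
  congr 1
  have h2 : ∑ d ∈ Finset.Icc 2 D, (g (d - 2) - g (d - 1))
      = ∑ i ∈ Finset.range (D - 1), (g i - g (i + 1)) := by
    rw [show Finset.Icc 2 D = Finset.Ico 2 (D + 1) by ext x; simp only [mem_Icc, mem_Ico]; omega,
      Finset.sum_Ico_eq_sum_range]
    refine Finset.sum_congr (by rw [show D + 1 - 2 = D - 1 from by omega]) fun i hi => ?_
    rw [show 2 + i - 2 = i from by omega, show 2 + i - 1 = i + 1 from by omega]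
  rw [h2, Finset.sum_range_sub' g]
  simp [hg]
end

section
/- Let k ≥ 2 and n ≥ 1 be integers, let Ω be a query-degree distribution on {1,…,k} with query difficulty d̄ = Σ_{d=1}^k d·Ω_d, and let A be the random n×k sampling matrix over ZMod 2 with i.i.d. query rows drawn from Ω. Let x be uniformly distributed on (ZMod 2)^k, independent of A. Then: (1) for each fixed column index j ∈ {1,…,k}, the probability that the j-th column of A is the zero vector equals (1 − d̄/k)^n; and (2) for every estimator f mapping a pair (an n×k matrix over ZMod 2, a vector in (ZMod 2)^n) to a vector in (ZMod 2)^k, the error probability satisfies Pr( f(A, A·x) ≠ x ) ≥ (1/2)·(1 − d̄/k)^n. -/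
open Finset MeasureTheory

instance : MeasurableSpace (ZMod 2) := ⊤
instance : MeasurableSingletonClass (ZMod 2) := ⟨fun _ => trivial⟩

/-- The probability weight of a row `v`: a row is the indicator vector of a uniformly random
`d`-element subset of the `k` coordinates, with `d` drawn according to `Ω`. -/
noncomputable def rowWeight (k : ℕ) (Ω : ℕ → ℝ) (v : Fin k → ZMod 2) : ℝ :=
  if hammingNorm v = 0 then 0 else Ω (hammingNorm v) / (Nat.choose k (hammingNorm v) : ℝ)

/-- The distribution of a single random query row in `(ZMod 2)^k`. -/
noncomputable def rowMeasure (k : ℕ) (Ω : ℕ → ℝ) : Measure (Fin k → ZMod 2) :=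
  ∑ v : Fin k → ZMod 2, ENNReal.ofReal (rowWeight k Ω v) • Measure.dirac v

/-- The distribution of the random `n × k` sampling matrix with i.i.d. rows. -/
noncomputable def matrixMeasure (k n : ℕ) (Ω : ℕ → ℝ) :
    Measure (Fin n → Fin k → ZMod 2) :=
  Measure.pi fun _ : Fin n => rowMeasure k Ω

open scoped ENNReal Matrix

/-!
A row misses column `j` exactly when its support, a uniform `d`-subset, avoids `j`, which
happens with probability `C(k-1,d)/C(k,d) = 1 - d/k`; averaging over `d` and using the
independence of the rows gives `(1 - d̄/k)^n` for the column being zero. If column `j` of `A` is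
zero, then `x` and `x + e_j` produce the same observation `A x`, so `x ↦ x + e_j` maps the
inputs an estimator recovers injectively into those it gets wrong: it errs on at least half of
them.
-/

theorem Nat.cast_choose_pred_div_cast_choose {n d : ℕ} (hn : 0 < n) (hd : d ≤ n) :
    ((n - 1).choose d : ℝ) / n.choose d = 1 - d / n := by
  obtain ⟨m, rfl⟩ := Nat.exists_eq_add_of_lt hn
  have key : ((m.choose d * (m + 1) : ℕ) : ℝ) = ((m + 1).choose d * (m + 1 - d) : ℕ) := by
    rw [Nat.choose_mul_succ_eq]
  have hpos : (0 : ℝ) < (m + 1).choose d := by exact_mod_cast Nat.choose_pos (by omega)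
  push_cast [Nat.cast_sub (by omega : d ≤ m + 1)] at key
  simp only [zero_add, add_tsub_cancel_right, Nat.cast_add, Nat.cast_one]
  field_simp
  linarith

theorem card_filter_apply_eq_zero_and_hammingNorm_eq {ι : Type*} [Fintype ι] [DecidableEq ι]
    (j : ι) (d : ℕ) :
    #{v : ι → ZMod 2 | v j = 0 ∧ hammingNorm v = d} = (Fintype.card ι - 1).choose d := by
  rw [← card_univ, ← card_erase_of_mem (mem_univ j), ← card_powersetCard]
  refine card_nbij' (fun v => ({i | v i ≠ 0} : Finset ι)) (fun s i => if i ∈ s then 1 else 0)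
    ?_ ?_ ?_ ?_
  · intro v hv
    simp only [coe_filter, Set.mem_ofPred_eq, mem_univ, true_and] at hv
    simp only [mem_coe, mem_powersetCard]
    refine ⟨fun i hi => mem_erase.mpr ⟨fun hij => (mem_filter.mp hi).2 (hij ▸ hv.1), mem_univ i⟩,
      hv.2⟩
  · intro s hs
    simp only [mem_coe, mem_powersetCard] at hs
    simp only [coe_filter, Set.mem_ofPred_eq, mem_univ, true_and]
    refine ⟨if_neg fun hj => (mem_erase.mp (hs.1 hj)).1 rfl, ?_⟩
    rw [← hs.2, hammingNorm]
    congr 1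
    ext i; by_cases hi : i ∈ s <;> simp [hi]
  · intro v _
    funext i
    by_cases hi : v i = 0
    · simp [hi]
    · have h1 : v i = 1 := Fin.eq_one_of_ne_zero _ hi
      simpa [hi] using h1.symm
  · intro s _
    ext i; by_cases hi : i ∈ s <;> simp [hi]

theorem rowWeight_eq_sum_ite (k : ℕ) (Ω : ℕ → ℝ) (v : Fin k → ZMod 2) :
    rowWeight k Ω v = ∑ d ∈ Icc 1 k, if hammingNorm v = d then Ω d / k.choose d else 0 := by
  have := hammingNorm_le_card_fintype (x := v)
  simp only [Fintype.card_fin] at this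
  simp only [sum_ite_eq, rowWeight, mem_Icc]
  split_ifs <;> first | rfl | omega

theorem sum_rowWeight_of_apply_eq_zero (k : ℕ) (Ω : ℕ → ℝ) (j : Fin k) :
    ∑ v with v j = 0, rowWeight k Ω v = ∑ d ∈ Icc 1 k, (1 - d / k) * Ω d := by
  simp_rw [rowWeight_eq_sum_ite]
  rw [sum_comm]
  refine sum_congr rfl fun d hd => ?_
  rw [← sum_filter, filter_filter, sum_const, card_filter_apply_eq_zero_and_hammingNorm_eq,
    Fintype.card_fin, nsmul_eq_mul, mul_div_assoc', mul_div_right_comm,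
    Nat.cast_choose_pred_div_cast_choose j.pos (mem_Icc.mp hd).2]

theorem rowMeasure_apply (k : ℕ) (Ω : ℕ → ℝ) (S : Set (Fin k → ZMod 2)) [DecidablePred (· ∈ S)] :
    rowMeasure k Ω S = ∑ v with v ∈ S, ENNReal.ofReal (rowWeight k Ω v) := by
  simp only [rowMeasure, Measure.coe_finsetSum, Finset.sum_apply, Measure.smul_apply,
    Measure.dirac_apply, smul_eq_mul, sum_filter]
  refine sum_congr rfl fun v _ => ?_
  by_cases hv : v ∈ S <;> simp [hv]

instance (k : ℕ) (Ω : ℕ → ℝ) : IsFiniteMeasure (rowMeasure k Ω) := by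
  classical
  exact ⟨(rowMeasure_apply k Ω _).trans_lt (ENNReal.sum_lt_top.mpr fun _ _ => ENNReal.ofReal_lt_top)⟩

theorem rowWeight_nonneg {k : ℕ} {Ω : ℕ → ℝ} (hΩ : ∀ d ∈ Icc 1 k, 0 ≤ Ω d)
    (v : Fin k → ZMod 2) : 0 ≤ rowWeight k Ω v := by
  rw [rowWeight_eq_sum_ite]
  refine sum_nonneg fun d hd => ?_
  split_ifs
  · exact div_nonneg (hΩ d hd) (Nat.cast_nonneg _)
  · rfl

theorem rowMeasure_setOf_apply_eq_zero {k : ℕ} {Ω : ℕ → ℝ} (hΩ : ∀ d ∈ Icc 1 k, 0 ≤ Ω d)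
    (j : Fin k) :
    rowMeasure k Ω {v | v j = 0} = ENNReal.ofReal (∑ d ∈ Icc 1 k, (1 - d / k) * Ω d) := by
  classical
  rw [rowMeasure_apply, ← sum_rowWeight_of_apply_eq_zero,
    ENNReal.ofReal_sum_of_nonneg fun v _ => rowWeight_nonneg hΩ v]
  rfl

theorem matrixMeasure_setOf_forall_mem (k n : ℕ) (Ω : ℕ → ℝ) (S : Set (Fin k → ZMod 2)) :
    matrixMeasure k n Ω {A | ∀ i, A i ∈ S} = rowMeasure k Ω S ^ n := by
  simpa [Set.pi, matrixMeasure] using Measure.pi_pi (fun _ : Fin n => rowMeasure k Ω) fun _ => S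

theorem Matrix.periodic_mulVec_single_one_of_col_eq_zero {m n R : Type*} [Fintype n]
    [DecidableEq n] [NonAssocSemiring R] (A : Matrix m n R) {j : n} (hA : ∀ i, A i j = 0) :
    Function.Periodic (A *ᵥ ·) (Pi.single j 1) := fun x => by
  dsimp only
  rw [Matrix.mulVec_add, Matrix.mulVec_single_one, show A.col j = 0 from funext hA, add_zero]

theorem inv_two_le_uniformOfFintype_estimator_ne_of_periodic {G β : Type*} [AddGroup G] [Fintype G]
    [MeasurableSpace G] [MeasurableSingletonClass G] (obs : G → β) {e : G} (he : e ≠ 0)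
    (hobs : Function.Periodic obs e) (f : β → G) :
    2⁻¹ ≤ (PMF.uniformOfFintype G).toMeasure {x | f (obs x) ≠ x} := by
  classical
  set S := {x | f (obs x) ≠ x}
  have hinj : Fintype.card {x // x ∉ S} ≤ Fintype.card S :=
    Fintype.card_le_of_injective (fun x => ⟨x.1 + e, by
      have hx : f (obs x.1) = x.1 := not_not.mp x.2
      simpa [S, hobs x, hx] using he⟩)
      fun x y hxy => Subtype.ext (add_right_cancel (congrArg Subtype.val hxy))
  have hcard : Fintype.card G ≤ 2 * Fintype.card S := by
    have hcompl := Fintype.card_subtype_compl (· ∈ S)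
    have hS : Fintype.card S = Fintype.card {x // x ∈ S} := Fintype.card_congr (Equiv.refl _)
    omega
  rw [PMF.toMeasure_uniformOfFintype_apply S (Set.toFinite S).measurableSet,
    ENNReal.le_div_iff_mul_le (by simp) (by simp), ← ENNReal.div_eq_inv_mul,
    ENNReal.div_le_iff (by simp) (by simp), mul_comm]
  exact_mod_cast hcard

theorem le_prod_apply_of_forall_mem {α β : Type*} [MeasurableSpace α] [MeasurableSpace β]
    {μ : Measure α} {ν : Measure β} [SFinite ν] {T : Set (α × β)} (hT : MeasurableSet T)
    {E : Set α} (hE : MeasurableSet E) {c : ℝ≥0∞} (h : ∀ a ∈ E, c ≤ ν (Prod.mk a ⁻¹' T)) :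
    c * μ E ≤ μ.prod ν T := by
  rw [Measure.prod_apply hT, ← setLIntegral_const]
  calc ∫⁻ _ in E, c ∂μ ≤ ∫⁻ a in E, ν (Prod.mk a ⁻¹' T) ∂μ := setLIntegral_mono' hE h
    _ ≤ ∫⁻ a, ν (Prod.mk a ⁻¹' T) ∂μ := setLIntegral_le_lintegral E _

theorem stmt15_general (k n : ℕ) (hk : 2 ≤ k)
    (Ω : ℕ → ℝ) (hΩ0 : ∀ d ∈ Finset.Icc 1 k, 0 ≤ Ω d)
    (hΩ1 : ∑ d ∈ Finset.Icc 1 k, Ω d = 1)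
    (dbar : ℝ) (hdbar : dbar = ∑ d ∈ Finset.Icc 1 k, (d : ℝ) * Ω d) :
    -- (1) for each column index `j`, the probability that the `j`-th column of `A` is zero
    -- equals `(1 − d̄/k)^n`
    (∀ j : Fin k,
      matrixMeasure k n Ω {A : Fin n → Fin k → ZMod 2 | ∀ i, A i j = 0} =
        ENNReal.ofReal ((1 - dbar / k) ^ n)) ∧
    -- (2) for every estimator `f`, `Pr(f(A, A·x) ≠ x) ≥ (1/2)·(1 − d̄/k)^n` where `x` is
    -- uniform on `(ZMod 2)^k`, independent of `A`
    (∀ f : (Fin n → Fin k → ZMod 2) → (Fin n → ZMod 2) → (Fin k → ZMod 2),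
      ENNReal.ofReal ((1 / 2) * (1 - dbar / k) ^ n) ≤
        ((matrixMeasure k n Ω).prod (PMF.uniformOfFintype (Fin k → ZMod 2)).toMeasure)
          {p : (Fin n → Fin k → ZMod 2) × (Fin k → ZMod 2) |
            f p.1 (fun i => ∑ j, p.1 i j * p.2 j) ≠ p.2}) := by
  have hsum : ∑ d ∈ Icc 1 k, (1 - d / k) * Ω d = 1 - dbar / k := by
    simp only [sub_mul, one_mul, sum_sub_distrib, hΩ1, hdbar, sum_div, div_mul_eq_mul_div]
  have hsum_nonneg : 0 ≤ 1 - dbar / k := hsum ▸ sum_nonneg fun d hd => mul_nonneg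
    (sub_nonneg.mpr (div_le_one_of_le₀ (by exact_mod_cast (mem_Icc.mp hd).2) k.cast_nonneg))
    (hΩ0 d hd)
  have hcol : ∀ j : Fin k, matrixMeasure k n Ω {A | ∀ i, A i j = 0} =
      ENNReal.ofReal ((1 - dbar / k) ^ n) := fun j => by
    rw [ENNReal.ofReal_pow hsum_nonneg, ← hsum, ← rowMeasure_setOf_apply_eq_zero hΩ0 j]
    exact matrixMeasure_setOf_forall_mem k n Ω {v | v j = 0}
  refine ⟨hcol, fun f => ?_⟩
  let j : Fin k := ⟨0, by omega⟩
  calc ENNReal.ofReal ((1 / 2) * (1 - dbar / k) ^ n)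
      = 2⁻¹ * matrixMeasure k n Ω {A | ∀ i, A i j = 0} := by
        rw [hcol, ENNReal.ofReal_mul (by norm_num), one_div, ENNReal.ofReal_inv_of_pos two_pos,
          ENNReal.ofReal_ofNat]
    _ ≤ _ := le_prod_apply_of_forall_mem (Set.toFinite _).measurableSet
        (Set.toFinite _).measurableSet fun A hA =>
          inv_two_le_uniformOfFintype_estimator_ne_of_periodic _ (by simp)
            (Matrix.periodic_mulVec_single_one_of_col_eq_zero A hA) (f A)

theorem stmt15 (k n : ℕ) (hk : 2 ≤ k) (hn : 1 ≤ n)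
    (Ω : ℕ → ℝ) (hΩ0 : ∀ d ∈ Finset.Icc 1 k, 0 ≤ Ω d)
    (hΩ1 : ∑ d ∈ Finset.Icc 1 k, Ω d = 1)
    (dbar : ℝ) (hdbar : dbar = ∑ d ∈ Finset.Icc 1 k, (d : ℝ) * Ω d) :
    -- (1) for each column index `j`, the probability that the `j`-th column of `A` is zero
    -- equals `(1 − d̄/k)^n`
    (∀ j : Fin k,
      matrixMeasure k n Ω {A : Fin n → Fin k → ZMod 2 | ∀ i, A i j = 0} =
        ENNReal.ofReal ((1 - dbar / k) ^ n)) ∧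
    -- (2) for every estimator `f`, `Pr(f(A, A·x) ≠ x) ≥ (1/2)·(1 − d̄/k)^n` where `x` is
    -- uniform on `(ZMod 2)^k`, independent of `A`
    (∀ f : (Fin n → Fin k → ZMod 2) → (Fin n → ZMod 2) → (Fin k → ZMod 2),
      ENNReal.ofReal ((1 / 2) * (1 - dbar / k) ^ n) ≤
        ((matrixMeasure k n Ω).prod (PMF.uniformOfFintype (Fin k → ZMod 2)).toMeasure)
          {p : (Fin n → Fin k → ZMod 2) × (Fin k → ZMod 2) |
            f p.1 (fun i => ∑ j, p.1 i j * p.2 j) ≠ p.2}) :=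
  stmt15_general k n hk Ω hΩ0 hΩ1 dbar hdbar
end
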